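/- arXiv:2206.12306 — 3 statements merged into one kernel-verified Lean document; each statement's English description precedes it below -/
import Mathlib

section
/- If G is a K₄-free simple graph with m edges and t triangles, then t ≤ m²/8. -/
open Finset SimpleGraph

private lemma third_vertex {V : Type*} [DecidableEq V] {s : Finset V} (hcard : s.card = 3)
    {p q : V} (hp : p ∈ s) (hq : q ∈ s) (hpq : p ≠ q) :
    ∃ d ∈ s, d ≠ p ∧ d ≠ q ∧ s = {p, q, d} := by
  have h2 : ({p, q} : Finset V) ⊆ s := by
    intro x hx; simp only [mem_insert, mem_singleton] at hx
    rcases hx with rfl | rfl <;> assumption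
  have hc2 : ({p, q} : Finset V).card = 2 := by
    rw [card_insert_of_notMem (by simp [hpq]), card_singleton]
  have h1 : (s \ {p, q}).card = 1 := by rw [card_sdiff_of_subset h2, hcard, hc2]
  obtain ⟨d, hd⟩ := Finset.card_eq_one.mp h1
  have hds : d ∈ s \ {p, q} := hd ▸ mem_singleton_self d
  rw [mem_sdiff, mem_insert, mem_singleton] at hds
  push_neg at hds
  refine ⟨d, hds.1, hds.2.1, hds.2.2, ?_⟩
  apply Finset.Subset.antisymm
  · intro x hx
    by_cases hx2 : x ∈ ({p, q} : Finset V)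
    · simp only [mem_insert, mem_singleton] at hx2 ⊢; tauto
    · have : x ∈ s \ {p, q} := mem_sdiff.mpr ⟨hx, hx2⟩
      rw [hd, mem_singleton] at this
      simp [this]
  · intro x hx
    simp only [mem_insert, mem_singleton] at hx
    rcases hx with rfl | rfl | rfl
    · exact hp
    · exact hq
    · exact hds.1

private lemma edge_mantel_aux : ∀ (m : ℕ) {V : Type*} [Fintype V] [DecidableEq V]
    (G : SimpleGraph V) [DecidableRel G.Adj], G.CliqueFree 4 →
    G.edgeFinset.card = m → 8 * (G.cliqueFinset 3).card ≤ m ^ 2 := by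
  intro m
  induction m using Nat.strong_induction_on with
  | _ m IH =>
  intro V _ _ G _ h hm
  by_cases ht : G.cliqueFinset 3 = ∅
  · simp [ht]
  obtain ⟨s0, hs0m⟩ := Finset.nonempty_iff_ne_empty.mpr ht
  have hs0 := SimpleGraph.mem_cliqueFinset_iff.mp hs0m
  obtain ⟨u, v, w, huv, huw, hvw, rfl⟩ := SimpleGraph.is3Clique_iff.mp hs0
  have hKuvw : ∀ x : V, ¬(G.Adj u x ∧ G.Adj v x ∧ G.Adj w x) := by
    rintro x ⟨h1, h2, h3⟩
    refine h (insert x {u, v, w}) (hs0.insert ?_)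
    intro b hb
    simp only [mem_insert, mem_singleton] at hb
    rcases hb with rfl | rfl | rfl
    · exact h1.symm
    · exact h2.symm
    · exact h3.symm
  -- the deleted edges
  set T3 : Finset (Sym2 V) := {s(u, v), s(u, w), s(v, w)} with hT3
  have e12 : s(u, v) ≠ s(u, w) := by
    rw [Ne, Sym2.eq_iff]; push_neg
    exact ⟨fun _ => hvw.ne, fun h1 => absurd h1 huw.ne⟩
  have e13 : s(u, v) ≠ s(v, w) := by
    rw [Ne, Sym2.eq_iff]; push_neg
    exact ⟨fun h1 => absurd h1 huv.ne, fun h1 => absurd h1 huw.ne⟩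
  have e23 : s(u, w) ≠ s(v, w) := by
    rw [Ne, Sym2.eq_iff]; push_neg
    exact ⟨fun h1 => absurd h1 huv.ne, fun h1 => absurd h1 huw.ne⟩
  have hT3card : T3.card = 3 := Finset.card_eq_three.mpr ⟨_, _, _, e12, e13, e23, rfl⟩
  set G' : SimpleGraph V := G.deleteEdges (↑T3 : Set (Sym2 V)) with hG'
  haveI hdec : DecidableRel G'.Adj := fun a b =>
    decidable_of_iff (G.Adj a b ∧ s(a, b) ∉ T3) (by rw [hG', SimpleGraph.deleteEdges_adj]; simp)
  -- the books
  set A : Finset V := univ.filter (fun x => G.Adj u x ∧ G.Adj v x ∧ x ≠ w) with hA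
  set B : Finset V := univ.filter (fun x => G.Adj u x ∧ G.Adj w x ∧ x ≠ v) with hB
  set C : Finset V := univ.filter (fun x => G.Adj v x ∧ G.Adj w x ∧ x ≠ u) with hC
  have hAmem : ∀ x ∈ A, G.Adj u x ∧ G.Adj v x ∧ x ≠ u ∧ x ≠ v ∧ x ≠ w := by
    intro x hx; rw [hA, mem_filter] at hx
    exact ⟨hx.2.1, hx.2.2.1, hx.2.1.ne', hx.2.2.1.ne', hx.2.2.2⟩
  have hBmem : ∀ x ∈ B, G.Adj u x ∧ G.Adj w x ∧ x ≠ u ∧ x ≠ v ∧ x ≠ w := by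
    intro x hx; rw [hB, mem_filter] at hx
    exact ⟨hx.2.1, hx.2.2.1, hx.2.1.ne', hx.2.2.2, hx.2.2.1.ne'⟩
  have hCmem : ∀ x ∈ C, G.Adj v x ∧ G.Adj w x ∧ x ≠ u ∧ x ≠ v ∧ x ≠ w := by
    intro x hx; rw [hC, mem_filter] at hx
    exact ⟨hx.2.1, hx.2.2.1, hx.2.2.2, hx.2.1.ne', hx.2.2.1.ne'⟩
  have hAB : Disjoint A B := by
    rw [Finset.disjoint_left]
    intro x hxA hxB
    exact hKuvw x ⟨(hAmem x hxA).1, (hAmem x hxA).2.1, (hBmem x hxB).2.1⟩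
  have hAC : Disjoint A C := by
    rw [Finset.disjoint_left]
    intro x hxA hxC
    exact hKuvw x ⟨(hAmem x hxA).1, (hAmem x hxA).2.1, (hCmem x hxC).2.1⟩
  have hBC : Disjoint B C := by
    rw [Finset.disjoint_left]
    intro x hxB hxC
    exact hKuvw x ⟨(hBmem x hxB).1, (hCmem x hxC).1, (hBmem x hxB).2.1⟩
  -- Triangle count: every triangle of G is a triangle of G' or contains a deleted edge
  have hsub : G.cliqueFinset 3 ⊆ G'.cliqueFinset 3 ∪ {({u, v, w} : Finset V)}
      ∪ A.image (fun x => ({u, v, x} : Finset V))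
      ∪ B.image (fun x => ({u, w, x} : Finset V))
      ∪ C.image (fun x => ({v, w, x} : Finset V)) := by
    intro s hs
    rw [SimpleGraph.mem_cliqueFinset_iff] at hs
    simp only [Finset.mem_union, Finset.mem_singleton, Finset.mem_image]
    by_cases hs' : G'.IsNClique 3 s
    · exact Or.inl <| Or.inl <| Or.inl <| Or.inl <| SimpleGraph.mem_cliqueFinset_iff.mpr hs'
    have hex : ∃ x ∈ s, ∃ y ∈ s, x ≠ y ∧ s(x, y) ∈ T3 := by
      by_contra hc
      push_neg at hc
      refine hs' ⟨fun x hx y hy hxy => ?_, hs.2⟩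
      rw [hG', SimpleGraph.deleteEdges_adj]
      exact ⟨hs.1 hx hy hxy, by simpa using hc x hx y hy hxy⟩
    obtain ⟨x, hx, y, hy, hxy, hmem⟩ := hex
    have hpairs : (u ∈ s ∧ v ∈ s) ∨ (u ∈ s ∧ w ∈ s) ∨ (v ∈ s ∧ w ∈ s) := by
      rw [hT3] at hmem
      simp only [mem_insert, mem_singleton, Sym2.eq_iff] at hmem
      rcases hmem with (⟨rfl, rfl⟩ | ⟨rfl, rfl⟩) | (⟨rfl, rfl⟩ | ⟨rfl, rfl⟩) |
        (⟨rfl, rfl⟩ | ⟨rfl, rfl⟩) <;> tauto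
    rcases hpairs with ⟨hu, hv⟩ | ⟨hu, hw⟩ | ⟨hv, hw⟩
    · obtain ⟨d, hd, hdu, hdv, hseq⟩ := third_vertex hs.2 hu hv huv.ne
      by_cases hdw : d = w
      · subst hdw; exact Or.inl (Or.inl (Or.inl (Or.inr hseq)))
      · refine Or.inl (Or.inl (Or.inr ⟨d, ?_, hseq.symm⟩))
        rw [hA, mem_filter]
        exact ⟨mem_univ d, hs.1 hu hd (Ne.symm hdu), hs.1 hv hd (Ne.symm hdv), hdw⟩
    · obtain ⟨d, hd, hdu, hdw, hseq⟩ := third_vertex hs.2 hu hw huw.ne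
      by_cases hdv : d = v
      · subst hdv
        refine Or.inl (Or.inl (Or.inl (Or.inr ?_)))
        rw [hseq]; ext z; simp only [mem_insert, mem_singleton]; tauto
      · refine Or.inl (Or.inr ⟨d, ?_, hseq.symm⟩)
        rw [hB, mem_filter]
        exact ⟨mem_univ d, hs.1 hu hd (Ne.symm hdu), hs.1 hw hd (Ne.symm hdw), hdv⟩
    · obtain ⟨d, hd, hdv, hdw, hseq⟩ := third_vertex hs.2 hv hw hvw.ne
      by_cases hdu : d = u
      · subst hdu
        refine Or.inl (Or.inl (Or.inl (Or.inr ?_)))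
        rw [hseq]; ext z; simp only [mem_insert, mem_singleton]; tauto
      · refine Or.inr ⟨d, ?_, hseq.symm⟩
        rw [hC, mem_filter]
        exact ⟨mem_univ d, hs.1 hv hd (Ne.symm hdv), hs.1 hw hd (Ne.symm hdw), hdu⟩
  have htcount : (G.cliqueFinset 3).card ≤
      (G'.cliqueFinset 3).card + 1 + A.card + B.card + C.card := by
    have h0 := Finset.card_le_card hsub
    have h1 := card_union_le (G'.cliqueFinset 3 ∪ {({u, v, w} : Finset V)}
      ∪ A.image (fun x => ({u, v, x} : Finset V))
      ∪ B.image (fun x => ({u, w, x} : Finset V))) (C.image (fun x => ({v, w, x} : Finset V)))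
    have h2 := card_union_le (G'.cliqueFinset 3 ∪ {({u, v, w} : Finset V)}
      ∪ A.image (fun x => ({u, v, x} : Finset V))) (B.image (fun x => ({u, w, x} : Finset V)))
    have h3 := card_union_le (G'.cliqueFinset 3 ∪ {({u, v, w} : Finset V)})
      (A.image (fun x => ({u, v, x} : Finset V)))
    have h4 := card_union_le (G'.cliqueFinset 3) ({({u, v, w} : Finset V)} : Finset (Finset V))
    have h5 : (A.image (fun x => ({u, v, x} : Finset V))).card ≤ A.card := card_image_le
    have h6 : (B.image (fun x => ({u, w, x} : Finset V))).card ≤ B.card := card_image_le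
    have h7 : (C.image (fun x => ({v, w, x} : Finset V))).card ≤ C.card := card_image_le
    have h8 : ({({u, v, w} : Finset V)} : Finset (Finset V)).card = 1 := card_singleton _
    omega
  -- Edge count: the books give many distinct edges
  set Au : Finset (Sym2 V) := A.image (fun x => s(u, x)) with hAu
  set Av : Finset (Sym2 V) := A.image (fun x => s(v, x)) with hAv
  set Bu : Finset (Sym2 V) := B.image (fun x => s(u, x)) with hBu
  set Bw : Finset (Sym2 V) := B.image (fun x => s(w, x)) with hBw
  set Cv : Finset (Sym2 V) := C.image (fun x => s(v, x)) with hCv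
  set Cw : Finset (Sym2 V) := C.image (fun x => s(w, x)) with hCw
  have hD1 : ∀ (p q : V) (X Y : Finset V), p ≠ q → (∀ y ∈ Y, y ≠ p) →
      Disjoint (X.image fun x => s(p, x)) (Y.image fun y => s(q, y)) := by
    intro p q X Y hpq hY
    rw [Finset.disjoint_left]
    rintro e he he'
    obtain ⟨x, _, rfl⟩ := mem_image.mp he
    obtain ⟨y, hy, hxy⟩ := mem_image.mp he'
    rw [Sym2.eq_iff] at hxy
    rcases hxy with ⟨h1, _⟩ | ⟨h1, h2⟩
    · exact hpq h1.symm
    · exact hY y hy h2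
  have hD2 : ∀ (p : V) (X Y : Finset V), Disjoint X Y → (∀ y ∈ Y, y ≠ p) →
      Disjoint (X.image fun x => s(p, x)) (Y.image fun y => s(p, y)) := by
    intro p X Y hXY hY
    rw [Finset.disjoint_left]
    rintro e he he'
    obtain ⟨x, hx, rfl⟩ := mem_image.mp he
    obtain ⟨y, hy, hxy⟩ := mem_image.mp he'
    rw [Sym2.eq_iff] at hxy
    rcases hxy with ⟨_, h2⟩ | ⟨h1, h2⟩
    · exact Finset.disjoint_left.mp hXY (h2 ▸ hx) hy
    · exact hY y hy h2
  have hDT : ∀ (p : V) (Y : Finset V), (∀ y ∈ Y, y ≠ u ∧ y ≠ v ∧ y ≠ w) →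
      Disjoint T3 (Y.image fun y => s(p, y)) := by
    intro p Y hY
    rw [Finset.disjoint_right]
    rintro e he he'
    obtain ⟨y, hy, rfl⟩ := mem_image.mp he
    rw [hT3] at he'
    simp only [mem_insert, mem_singleton, Sym2.eq_iff] at he'
    obtain ⟨n1, n2, n3⟩ := hY y hy
    rcases he' with (⟨_, h2⟩ | ⟨_, h2⟩) | (⟨_, h2⟩ | ⟨_, h2⟩) | (⟨_, h2⟩ | ⟨_, h2⟩) <;>
      first | exact n1 h2 | exact n2 h2 | exact n3 h2
  have hAne_u : ∀ y ∈ A, y ≠ u := fun y hy => (hAmem y hy).2.2.1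
  have hAne : ∀ y ∈ A, y ≠ u ∧ y ≠ v ∧ y ≠ w := fun y hy => (hAmem y hy).2.2
  have hBne_u : ∀ y ∈ B, y ≠ u := fun y hy => (hBmem y hy).2.2.1
  have hBne_v : ∀ y ∈ B, y ≠ v := fun y hy => (hBmem y hy).2.2.2.1
  have hBne : ∀ y ∈ B, y ≠ u ∧ y ≠ v ∧ y ≠ w := fun y hy => (hBmem y hy).2.2
  have hCne_u : ∀ y ∈ C, y ≠ u := fun y hy => (hCmem y hy).2.2.1
  have hCne_v : ∀ y ∈ C, y ≠ v := fun y hy => (hCmem y hy).2.2.2.1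
  have hCne_w : ∀ y ∈ C, y ≠ w := fun y hy => (hCmem y hy).2.2.2.2
  have hCne : ∀ y ∈ C, y ≠ u ∧ y ≠ v ∧ y ≠ w := fun y hy => (hCmem y hy).2.2
  set S : Finset (Sym2 V) := T3 ∪ (Au ∪ (Av ∪ (Bu ∪ (Bw ∪ (Cv ∪ Cw))))) with hS
  have hSsub : S ⊆ G.edgeFinset := by
    rw [hS]
    intro e he
    simp only [Finset.mem_union, hT3, mem_insert, mem_singleton, hAu, hAv, hBu, hBw, hCv, hCw,
      mem_image] at he
    rw [SimpleGraph.mem_edgeFinset]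
    rcases he with (rfl | rfl | rfl) | ⟨x, hx, rfl⟩ | ⟨x, hx, rfl⟩ | ⟨x, hx, rfl⟩ |
      ⟨x, hx, rfl⟩ | ⟨x, hx, rfl⟩ | ⟨x, hx, rfl⟩
    · exact huv
    · exact huw
    · exact hvw
    · exact (hAmem x hx).1
    · exact (hAmem x hx).2.1
    · exact (hBmem x hx).1
    · exact (hBmem x hx).2.1
    · exact (hCmem x hx).1
    · exact (hCmem x hx).2.1
  have hinj : ∀ p : V, Function.Injective (fun x : V => s(p, x)) :=
    fun p x y hxy => Sym2.congr_right.mp hxy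
  have hScard : S.card = 3 + (A.card + (A.card + (B.card + (B.card + (C.card + C.card))))) := by
    rw [hS]
    rw [Finset.card_union_of_disjoint (by
      simp only [hAu, hAv, hBu, hBw, hCv, hCw, Finset.disjoint_union_right]
      exact ⟨hDT u A hAne, hDT v A hAne, hDT u B hBne, hDT w B hBne, hDT v C hCne, hDT w C hCne⟩)]
    rw [Finset.card_union_of_disjoint (by
      simp only [hAu, hAv, hBu, hBw, hCv, hCw, Finset.disjoint_union_right]
      exact ⟨hD1 u v A A huv.ne hAne_u, hD2 u A B hAB hBne_u, hD1 u w A B huw.ne hBne_u,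
        hD1 u v A C huv.ne hCne_u, hD1 u w A C huw.ne hCne_u⟩)]
    rw [Finset.card_union_of_disjoint (by
      simp only [hAv, hBu, hBw, hCv, hCw, Finset.disjoint_union_right]
      exact ⟨hD1 v u A B huv.ne.symm hBne_v, hD1 v w A B hvw.ne hBne_v,
        hD2 v A C hAC hCne_v, hD1 v w A C hvw.ne hCne_v⟩)]
    rw [Finset.card_union_of_disjoint (by
      simp only [hBu, hBw, hCv, hCw, Finset.disjoint_union_right]
      exact ⟨hD1 u w B B huw.ne hBne_u, hD1 u v B C huv.ne hCne_u, hD1 u w B C huw.ne hCne_u⟩)]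
    rw [Finset.card_union_of_disjoint (by
      simp only [hBw, hCv, hCw, Finset.disjoint_union_right]
      exact ⟨hD1 w v B C hvw.ne.symm hCne_w, hD2 w B C hBC hCne_w⟩)]
    rw [Finset.card_union_of_disjoint (hD1 v w C C hvw.ne hCne_v)]
    rw [hT3card, hAu, hAv, hBu, hBw,
      Finset.card_image_of_injective A (hinj u), Finset.card_image_of_injective A (hinj v),
      Finset.card_image_of_injective B (hinj u), Finset.card_image_of_injective B (hinj w),
      Finset.card_image_of_injective C (hinj v), Finset.card_image_of_injective C (hinj w)]
  have hedge : 3 + 2 * (A.card + B.card + C.card) ≤ m := by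
    have := Finset.card_le_card hSsub
    omega
  -- the smaller graph
  have hG'free : G'.CliqueFree 4 :=
    SimpleGraph.CliqueFree.anti (SimpleGraph.deleteEdges_le _) h
  have hT3subE : T3 ⊆ G.edgeFinset := fun e he => hSsub (by rw [hS]; exact mem_union_left _ he)
  have hEF : G'.edgeFinset = G.edgeFinset \ T3 := by
    ext e
    simp only [SimpleGraph.mem_edgeFinset, Finset.mem_sdiff, hG',
      SimpleGraph.edgeSet_deleteEdges, Set.mem_diff, Finset.mem_coe,
      SimpleGraph.mem_edgeFinset]
  have h3m : 3 ≤ m := by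
    have := Finset.card_le_card hT3subE
    omega
  have hm3 : G'.edgeFinset.card = m - 3 := by rw [hEF, card_sdiff_of_subset hT3subE, hT3card, hm]
  have hIH := IH (m - 3) (by omega) G' hG'free hm3
  obtain ⟨k, rfl⟩ : ∃ k, m = k + 3 := ⟨m - 3, by omega⟩
  have hk : k + 3 - 3 = k := by omega
  rw [hk] at hIH
  have hsq : (k + 3) ^ 2 = k ^ 2 + 6 * k + 9 := by ring
  rw [hsq]
  generalize hK : k ^ 2 = K at hIH ⊢
  omega

/-- Edge Mantel's theorem: a `K₄`-free graph with `m` edges has at most `m²/8` triangles. -/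
theorem edge_mantel {V : Type*} [Fintype V] [DecidableEq V]
    (G : SimpleGraph V) [DecidableRel G.Adj] (h : G.CliqueFree 4) :
    ((G.cliqueFinset 3).card : ℝ) ≤ (G.edgeFinset.card : ℝ) ^ 2 / 8 := by
  have key := edge_mantel_aux G.edgeFinset.card G h rfl
  rw [le_div_iff₀ (by norm_num : (0:ℝ) < 8)]
  have : ((8 * (G.cliqueFinset 3).card : ℕ) : ℝ) ≤ ((G.edgeFinset.card ^ 2 : ℕ) : ℝ) :=
    Nat.cast_le.mpr key
  push_cast at this
  linarith
end

section
/- If G is a K_{ω+1}-free simple graph, where ω ≥ 2 is the clique number of G, then the number c_ω(G) of ω-cliques satisfies c_ω(G) ≤ (1/(ω−1)) · c_{ω−1}(G)²/4, where c_{ω−1}(G) is the number of (ω−1)-cliques of G. -/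
/-!
Write `n = ω - 1`, let `M` and `N` be the numbers of `(n+1)`- and `n`-cliques, and let `d(S)` be
the number of `(n+1)`-cliques containing the `n`-clique `S`. Double counting gives
`∑ d(S) = (n+1) M` and `∑ d(S)² = ∑_K ∑_{S ⊆ K} d(S)`. Fix an `(n+1)`-clique `K`. Since `G` has
no `(n+2)`-clique, a vertex `v ∉ K` completes at most one `n`-subset of `K` to a clique, so the
map `(S, K', u) ↦ K' \ {u}` (with `S ⊆ K ∩ K'`, `K' ≠ K`, `u ∈ S`) is injective into the
`n`-cliques not contained in `K`; hence `n ∑_{S ⊆ K} (d(S) - 1) ≤ N - (n+1)`. Summing over `K`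
and applying Cauchy–Schwarz to `∑ d(S)` yields `n (n+1)² M ≤ N (N + n² - 1)`, which implies
`4 n M ≤ N²` because `N ≥ n + 1`.
-/

open Finset

lemma Finset.exists_notMem_eq_insert_of_card_eq_succ {α : Type*} [DecidableEq α] {n : ℕ}
    {S K K' : Finset α} (hK : #K = n + 1) (hSK : S ⊆ K) (hS : #S = n) (hK' : #K' = n + 1)
    (hSK' : S ⊆ K') (hne : K' ≠ K) : ∃ v ∉ K, K' = insert v S := by
  obtain ⟨v, hvS, rfl⟩ := exists_eq_insert_iff.2 ⟨hSK', by omega⟩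
  refine ⟨v, fun hvK => hne ?_, rfl⟩
  exact eq_of_subset_of_card_le (insert_subset hvK hSK) (by omega)

lemma Nat.four_mul_le_sq_of_mul_sq_add_le {n M N : ℕ} (hN : n + 1 ≤ N)
    (h : n * (n + 1) ^ 2 * M + (n + 1) * N ≤ N * (N + n * (n + 1))) : 4 * n * M ≤ N ^ 2 := by
  obtain _ | m := n
  · simp
  have key : 4 * (m + 2) ≤ (m + 4) * N := by nlinarith
  refine Nat.le_of_mul_le_mul_right (c := (m + 2) ^ 2) ?_ (by positivity)
  -- `(m+2)² N² - 4 (N (N + (m+1)(m+2)) - (m+2) N) = N m ((m+4) N - 4 (m+2))`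
  nlinarith [Nat.mul_le_mul_left (N * m) key]

namespace SimpleGraph

variable {V : Type*} [DecidableEq V] {G : SimpleGraph V} {n : ℕ}

lemma CliqueFree.eq_of_mem_of_subset_insert (hfree : G.CliqueFree (n + 2)) {K K₁ K₂ : Finset V}
    {v : V} (hK : G.IsNClique (n + 1) K) (hvK : v ∉ K) (h₁ : G.IsNClique (n + 1) K₁)
    (h₂ : G.IsNClique (n + 1) K₂) (hv₁ : v ∈ K₁) (hv₂ : v ∈ K₂) (hK₁ : K₁ ⊆ insert v K)
    (hK₂ : K₂ ⊆ insert v K) : K₁ = K₂ := by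
  by_contra hne
  have hcard : #(insert v K) ≤ #(K₁ ∪ K₂) := by
    have : K₁ ⊂ K₁ ∪ K₂ := ssubset_of_subset_of_ne subset_union_left fun h =>
      hne (eq_of_subset_of_card_le (union_eq_left.1 h.symm) (by rw [h₁.card_eq, h₂.card_eq])).symm
    rw [card_insert_of_notMem hvK, hK.card_eq, ← h₁.card_eq]
    exact card_lt_card this
  have hcover : K₁ ∪ K₂ = insert v K := eq_of_subset_of_card_le (union_subset hK₁ hK₂) hcard
  refine hfree _ (hK.insert (a := v) fun w hw => ?_)
  have hvw : v ≠ w := fun h => hvK (h ▸ hw)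
  rcases mem_union.1 (hcover ▸ mem_insert_of_mem hw) with hw | hw
  · exact h₁.isClique hv₁ hw hvw
  · exact h₂.isClique hv₂ hw hvw

variable [Fintype V] [DecidableRel G.Adj]

variable (G n) in
def cliqueDegree (S : Finset V) : ℕ := #{K ∈ G.cliqueFinset (n + 1) | S ⊆ K}

lemma filter_cliqueFinset_subset_eq_powersetCard {K : Finset V} (hK : G.IsClique (K : Set V)) :
    {S ∈ G.cliqueFinset n | S ⊆ K} = K.powersetCard n := by
  ext S
  simp only [mem_filter, mem_powersetCard, mem_cliqueFinset_iff, isNClique_iff]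
  exact ⟨fun ⟨⟨_, h⟩, hS⟩ => ⟨hS, h⟩, fun ⟨hS, h⟩ => ⟨⟨hK.subset (coe_subset.2 hS), h⟩, hS⟩⟩

lemma card_filter_cliqueFinset_subset {K : Finset V} (hK : G.IsNClique (n + 1) K) :
    #{S ∈ G.cliqueFinset n | S ⊆ K} = n + 1 := by
  rw [filter_cliqueFinset_subset_eq_powersetCard hK.isClique, card_powersetCard, hK.card_eq,
    Nat.choose_succ_self_right]

lemma sum_cliqueDegree :
    ∑ S ∈ G.cliqueFinset n, G.cliqueDegree n S = (n + 1) * #(G.cliqueFinset (n + 1)) := by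
  rw [mul_comm, ← sum_const_nat fun K hK =>
    card_filter_cliqueFinset_subset (G := G) (mem_cliqueFinset_iff.1 hK)]
  exact sum_card_bipartiteAbove_eq_sum_card_bipartiteBelow (fun S K : Finset V => S ⊆ K)

lemma sum_cliqueDegree_sq :
    ∑ S ∈ G.cliqueFinset n, G.cliqueDegree n S ^ 2 =
      ∑ K ∈ G.cliqueFinset (n + 1), ∑ S ∈ K.powersetCard n, G.cliqueDegree n S := by
  have := sum_sum_bipartiteAbove_eq_sum_sum_bipartiteBelow (fun S K : Finset V => S ⊆ K)
    (s := G.cliqueFinset n) (t := G.cliqueFinset (n + 1)) fun S _ => G.cliqueDegree n S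
  simp only [sum_const, smul_eq_mul] at this
  rw [sum_congr rfl fun S _ => sq (G.cliqueDegree n S)]
  refine this.trans (sum_congr rfl fun K hK => ?_)
  rw [← filter_cliqueFinset_subset_eq_powersetCard (mem_cliqueFinset_iff.1 hK).isClique]
  rfl

lemma sum_cliqueDegree_sub_one_mul_le (hfree : G.CliqueFree (n + 2)) {K : Finset V}
    (hK : G.IsNClique (n + 1) K) :
    (∑ S ∈ K.powersetCard n, (G.cliqueDegree n S - 1)) * n ≤
      #{T ∈ G.cliqueFinset n | ¬T ⊆ K} := by
  let P := (K.powersetCard n).sigma fun S => ({K' ∈ G.cliqueFinset (n + 1) | S ⊆ K'}.erase K) ×ˢ S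
  have hP : #P = (∑ S ∈ K.powersetCard n, (G.cliqueDegree n S - 1)) * n := by
    rw [card_sigma, sum_mul]
    refine sum_congr rfl fun S hS => ?_
    have hSK := mem_powersetCard.1 hS
    rw [card_product, card_erase_of_mem (mem_filter.2 ⟨mem_cliqueFinset_iff.2 hK, hSK.1⟩), hSK.2]
    rfl
  have hvertex : ∀ S K' u, ⟨S, K', u⟩ ∈ P → ∃ v ∉ K, K' = insert v S := by
    intro S K' u hp
    simp only [P, mem_sigma, mem_powersetCard, mem_product, mem_erase, mem_filter,
      mem_cliqueFinset_iff] at hp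
    obtain ⟨⟨hSK, hS⟩, ⟨hK'K, hK', hSK'⟩, -⟩ := hp
    exact exists_notMem_eq_insert_of_card_eq_succ hK.card_eq hSK hS hK'.card_eq hSK' hK'K
  rw [← hP]
  refine card_le_card_of_injOn (fun p => p.2.1.erase p.2.2) ?_ ?_
  · rintro ⟨S, K', u⟩ hp
    obtain ⟨v, hvK, rfl⟩ := hvertex _ _ _ hp
    simp only [P, mem_coe, mem_sigma, mem_powersetCard, mem_product, mem_erase, mem_filter,
      mem_cliqueFinset_iff] at hp ⊢
    obtain ⟨⟨hSK, -⟩, ⟨-, hK', -⟩, hu⟩ := hp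
    have hvu : v ≠ u := fun h => hvK (h ▸ hSK hu)
    exact ⟨hK'.erase_of_mem (mem_insert_of_mem hu),
      fun hsub => hvK (hsub (mem_erase.2 ⟨hvu, mem_insert_self v S⟩))⟩
  · rintro ⟨S₁, K₁, u₁⟩ hp₁ ⟨S₂, K₂, u₂⟩ hp₂ (heq : K₁.erase u₁ = K₂.erase u₂)
    obtain ⟨v₁, hv₁K, rfl⟩ := hvertex _ _ _ hp₁
    obtain ⟨v₂, hv₂K, rfl⟩ := hvertex _ _ _ hp₂
    simp only [P, mem_coe, mem_sigma, mem_powersetCard, mem_product, mem_erase, mem_filter,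
      mem_cliqueFinset_iff] at hp₁ hp₂
    obtain ⟨⟨hS₁K, -⟩, ⟨-, hK₁, -⟩, hu₁⟩ := hp₁
    obtain ⟨⟨hS₂K, -⟩, ⟨-, hK₂, -⟩, hu₂⟩ := hp₂
    have hv₁ : v₁ ∈ (insert v₂ S₂).erase u₂ :=
      heq ▸ mem_erase.2 ⟨fun h => hv₁K (h ▸ hS₁K hu₁), mem_insert_self _ _⟩
    obtain rfl : v₁ = v₂ :=
      (mem_insert.1 (mem_of_mem_erase hv₁)).resolve_right fun h => hv₁K (hS₂K h)
    have hK₁₂ : insert v₁ S₁ = insert v₁ S₂ :=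
      hfree.eq_of_mem_of_subset_insert hK hv₁K hK₁ hK₂ (mem_insert_self _ _)
        (mem_insert_self _ _) (insert_subset_insert _ hS₁K) (insert_subset_insert _ hS₂K)
    obtain rfl : S₁ = S₂ := by
      rw [← erase_insert (fun h => hv₁K (hS₁K h)), hK₁₂, erase_insert (fun h => hv₁K (hS₂K h))]
    obtain rfl : u₁ = u₂ := (erase_inj _ (mem_insert_of_mem hu₁)).1 heq
    rfl

lemma mul_sum_cliqueDegree_add_le (hfree : G.CliqueFree (n + 2)) {K : Finset V}
    (hK : G.IsNClique (n + 1) K) :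
    n * ∑ S ∈ K.powersetCard n, G.cliqueDegree n S + (n + 1) ≤
      #(G.cliqueFinset n) + n * (n + 1) := by
  have hpos : ∀ S ∈ K.powersetCard n, 1 ≤ G.cliqueDegree n S := fun S hS =>
    card_pos.2 ⟨K, mem_filter.2 ⟨mem_cliqueFinset_iff.2 hK, (mem_powersetCard.1 hS).1⟩⟩
  have hsum : ∑ S ∈ K.powersetCard n, G.cliqueDegree n S =
      ∑ S ∈ K.powersetCard n, (G.cliqueDegree n S - 1) + (n + 1) := by
    rw [← card_filter_cliqueFinset_subset hK,
      filter_cliqueFinset_subset_eq_powersetCard hK.isClique, card_eq_sum_ones, ← sum_add_distrib]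
    exact sum_congr rfl fun S hS => (Nat.sub_add_cancel (hpos S hS)).symm
  have hsplit := card_filter_add_card_filter_not (s := G.cliqueFinset n) (· ⊆ K)
  rw [card_filter_cliqueFinset_subset hK] at hsplit
  have := sum_cliqueDegree_sub_one_mul_le hfree hK
  rw [hsum]
  linarith

lemma mul_sum_cliqueDegree_sq_add_le (hfree : G.CliqueFree (n + 2)) :
    n * ∑ S ∈ G.cliqueFinset n, G.cliqueDegree n S ^ 2 + (n + 1) * #(G.cliqueFinset (n + 1)) ≤
      (#(G.cliqueFinset n) + n * (n + 1)) * #(G.cliqueFinset (n + 1)) := by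
  rw [sum_cliqueDegree_sq, mul_sum, mul_comm (n + 1), mul_comm _ #_, ← smul_eq_mul, ← sum_const,
    ← smul_eq_mul, ← sum_const, ← sum_add_distrib]
  exact sum_le_sum fun K hK => mul_sum_cliqueDegree_add_le hfree (mem_cliqueFinset_iff.1 hK)

lemma mul_card_cliqueFinset_succ_add_le (hfree : G.CliqueFree (n + 2))
    (hM : (G.cliqueFinset (n + 1)).Nonempty) :
    n * (n + 1) ^ 2 * #(G.cliqueFinset (n + 1)) + (n + 1) * #(G.cliqueFinset n) ≤
      #(G.cliqueFinset n) * (#(G.cliqueFinset n) + n * (n + 1)) := by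
  set M := #(G.cliqueFinset (n + 1))
  set N := #(G.cliqueFinset n)
  have hCS : ((n + 1) * M) ^ 2 ≤ N * ∑ S ∈ G.cliqueFinset n, G.cliqueDegree n S ^ 2 :=
    sum_cliqueDegree (G := G) ▸ sq_sum_le_card_mul_sum_sq
  have hsq := mul_sum_cliqueDegree_sq_add_le hfree
  refine Nat.le_of_mul_le_mul_right ?_ (card_pos.2 hM)
  nlinarith [Nat.mul_le_mul_left n hCS, Nat.mul_le_mul_left N hsq]

lemma four_mul_card_cliqueFinset_succ_le_sq (hfree : G.CliqueFree (n + 2)) :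
    4 * n * #(G.cliqueFinset (n + 1)) ≤ #(G.cliqueFinset n) ^ 2 := by
  rcases (G.cliqueFinset (n + 1)).eq_empty_or_nonempty with hM | hM
  · simp [hM]
  obtain ⟨K, hK⟩ := hM
  have hN : n + 1 ≤ #(G.cliqueFinset n) :=
    card_filter_cliqueFinset_subset (mem_cliqueFinset_iff.1 hK) ▸ card_filter_le _ _
  exact Nat.four_mul_le_sq_of_mul_sq_add_le hN (mul_card_cliqueFinset_succ_add_le hfree ⟨K, hK⟩)

end SimpleGraph

theorem clique_mantel_general {V : Type*} [Fintype V] [DecidableEq V]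
    (G : SimpleGraph V) [DecidableRel G.Adj] (ω : ℕ) (hω : 2 ≤ ω)
    (hfree : G.CliqueFree (ω + 1)) :
    ((G.cliqueFinset ω).card : ℝ) ≤
      (1 / ((ω : ℝ) - 1)) * ((G.cliqueFinset (ω - 1)).card : ℝ) ^ 2 / 4 := by
  obtain ⟨n, rfl⟩ : ∃ n, ω = n + 1 := ⟨ω - 1, by omega⟩
  have h := G.four_mul_card_cliqueFinset_succ_le_sq hfree
  rw [Nat.add_sub_cancel, Nat.cast_add_one, add_sub_cancel_right, one_div, le_div_iff₀ four_pos,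
    inv_mul_eq_div, le_div_iff₀ (Nat.cast_pos.2 (by omega))]
  exact_mod_cast (by linarith : #(G.cliqueFinset (n + 1)) * 4 * n ≤ #(G.cliqueFinset n) ^ 2)

/-- Clique Mantel's theorem: if `ω ≥ 2` is the clique number of `G` (so `G` has an
`ω`-clique but is `K_{ω+1}`-free), then
`c_ω(G) ≤ (1/(ω-1)) · c_{ω-1}(G)² / 4`. -/
theorem clique_mantel {V : Type*} [Fintype V] [DecidableEq V]
    (G : SimpleGraph V) [DecidableRel G.Adj] (ω : ℕ) (hω : 2 ≤ ω)
    (hclique : (G.cliqueFinset ω).Nonempty) (hfree : G.CliqueFree (ω + 1)) :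
    ((G.cliqueFinset ω).card : ℝ) ≤
      (1 / ((ω : ℝ) - 1)) * ((G.cliqueFinset (ω - 1)).card : ℝ) ^ 2 / 4 :=
  clique_mantel_general G ω hω hfree
end

section
/- If G is a K₄-free graph, A is a maximum matching of G, and B = E(G) \ A, then 2t ≤ Σ_{e ∈ B} val_G(e), where t is the number of triangles of G. -/
open Finset

/-- If `G` is `K₄`-free, `A` is a maximum matching, and `B = E(G) \ A`, then
`2t ≤ ∑_{e ∈ B} val_G(e)` where `t` is the number of triangles of `G`. -/
theorem two_triangles_le_sum_val {V : Type*} [Fintype V] [DecidableEq V]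
    (G : SimpleGraph V) [DecidableRel G.Adj] (h : G.CliqueFree 4)
    (A : Finset (Sym2 V)) (hA : A ⊆ G.edgeFinset)
    (hAdisj : ∀ e ∈ A, ∀ f ∈ A, e ≠ f → ∀ x, x ∈ e → x ∉ f)
    (hAmax : ∀ M : Finset (Sym2 V), M ⊆ G.edgeFinset →
      (∀ e ∈ M, ∀ f ∈ M, e ≠ f → ∀ x, x ∈ e → x ∉ f) → M.card ≤ A.card)
    (B : Finset (Sym2 V)) (hB : B = G.edgeFinset \ A) :
    2 * (G.cliqueFinset 3).card ≤
      ∑ e ∈ B, (Finset.univ.filter fun w => ∀ x ∈ e, G.Adj x w).card := by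
  subst hB
  -- every triangle contains at least two edges of B
  have aux2 : ∀ T ∈ G.cliqueFinset 3,
      2 ≤ ((G.edgeFinset \ A).filter fun e => ∀ x ∈ e, x ∈ T).card := by
    intro T hT
    rw [SimpleGraph.mem_cliqueFinset_iff] at hT
    obtain ⟨a, b, c, hab, hac, hbc, hTabc⟩ := Finset.card_eq_three.mp hT.2
    have hcl := hT.1
    subst hTabc
    have hadj_ab : G.Adj a b := hcl (by simp) (by simp) hab
    have hadj_ac : G.Adj a c := hcl (by simp) (by simp) hac
    have hadj_bc : G.Adj b c := hcl (by simp) (by simp) hbc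
    set S : Finset (Sym2 V) := {s(a,b), s(a,c), s(b,c)} with hS
    have hScard : S.card = 3 := by
      rw [hS, Finset.card_insert_of_notMem, Finset.card_insert_of_notMem,
        Finset.card_singleton]
      · simp only [Finset.mem_singleton, Sym2.eq_iff]
        tauto
      · simp only [Finset.mem_insert, Finset.mem_singleton, Sym2.eq_iff]
        tauto
    have hSsub : S \ A ⊆ (G.edgeFinset \ A).filter fun e => ∀ x ∈ e, x ∈ ({a,b,c} : Finset V) := by
      intro e he
      rw [Finset.mem_sdiff] at he
      have he1 := he.1
      rw [hS] at he1
      simp only [Finset.mem_insert, Finset.mem_singleton] at he1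
      rw [Finset.mem_filter, Finset.mem_sdiff]
      rcases he1 with rfl | rfl | rfl <;>
        refine ⟨⟨?_, he.2⟩, ?_⟩ <;>
          simp [SimpleGraph.mem_edgeFinset, hadj_ab, hadj_ac, hadj_bc, Sym2.mem_iff]
    have hSA : (S ∩ A).card ≤ 1 := by
      rw [Finset.card_le_one]
      intro e he f hf
      by_contra hne
      rw [Finset.mem_inter] at he hf
      have he1 := he.1
      have hf1 := hf.1
      rw [hS] at he1 hf1
      simp only [Finset.mem_insert, Finset.mem_singleton] at he1 hf1
      rcases he1 with rfl | rfl | rfl <;> rcases hf1 with rfl | rfl | rfl <;>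
        first
          | exact hne rfl
          | exact hAdisj _ he.2 _ hf.2 hne _ (Sym2.mem_mk_left _ _) (Sym2.mem_mk_left _ _)
          | exact hAdisj _ he.2 _ hf.2 hne _ (Sym2.mem_mk_left _ _) (Sym2.mem_mk_right _ _)
          | exact hAdisj _ he.2 _ hf.2 hne _ (Sym2.mem_mk_right _ _) (Sym2.mem_mk_left _ _)
          | exact hAdisj _ he.2 _ hf.2 hne _ (Sym2.mem_mk_right _ _) (Sym2.mem_mk_right _ _)
    have hkey := Finset.card_sdiff_add_card_inter S A
    have h2 : 2 ≤ (S \ A).card := by omega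
    exact h2.trans (Finset.card_le_card hSsub)
  -- the triangles containing a fixed edge inject into its common neighbors
  have aux1 : ∀ e ∈ G.edgeFinset \ A,
      ((G.cliqueFinset 3).filter fun T => ∀ x ∈ e, x ∈ T).card ≤
        (Finset.univ.filter fun w => ∀ x ∈ e, G.Adj x w).card := by
    intro e he
    induction e using Sym2.ind with
    | _ u v =>
      have huv : G.Adj u v := by
        have := (Finset.mem_sdiff.mp he).1
        simpa [SimpleGraph.mem_edgeFinset] using this
      have hne := huv.ne
      have hsub : ((G.cliqueFinset 3).filter fun T => ∀ x ∈ s(u,v), x ∈ T) ⊆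
          (Finset.univ.filter fun w => ∀ x ∈ s(u,v), G.Adj x w).image
            (fun w => insert w {u, v}) := by
        intro T hT
        rw [Finset.mem_filter, SimpleGraph.mem_cliqueFinset_iff] at hT
        obtain ⟨⟨hcl, hcard⟩, hmem⟩ := hT
        have hu : u ∈ T := hmem u (by simp)
        have hv : v ∈ T := hmem v (by simp)
        have hsub2 : ({u, v} : Finset V) ⊆ T := by
          intro x hx
          simp only [Finset.mem_insert, Finset.mem_singleton] at hx
          rcases hx with rfl | rfl <;> assumption
        have hcard2 : ({u, v} : Finset V).card = 2 := by
          rw [Finset.card_insert_of_notMem (by simp [hne]), Finset.card_singleton]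
        have hone : (T \ {u, v}).card = 1 := by
          rw [Finset.card_sdiff_of_subset hsub2, hcard, hcard2]
        obtain ⟨w, hw⟩ := Finset.card_eq_one.mp hone
        have hwT : w ∈ T ∧ w ∉ ({u, v} : Finset V) := by
          have : w ∈ T \ {u, v} := by rw [hw]; simp
          simpa [Finset.mem_sdiff] using this
        have hwu : w ≠ u := by intro hh; exact hwT.2 (by simp [hh])
        have hwv : w ≠ v := by intro hh; exact hwT.2 (by simp [hh])
        have hins : insert w {u, v} ⊆ T := by
          intro x hx
          simp only [Finset.mem_insert, Finset.mem_singleton] at hx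
          rcases hx with rfl | rfl | rfl
          · exact hwT.1
          · exact hu
          · exact hv
        have hcard3 : (insert w ({u, v} : Finset V)).card = 3 := by
          rw [Finset.card_insert_of_notMem hwT.2, hcard2]
        have hTeq : T = insert w {u, v} :=
          (Finset.eq_of_subset_of_card_le hins (by omega)).symm
        rw [Finset.mem_image]
        refine ⟨w, ?_, hTeq.symm⟩
        rw [Finset.mem_filter]
        refine ⟨Finset.mem_univ _, ?_⟩
        intro x hx
        rw [Sym2.mem_iff] at hx
        rcases hx with rfl | rfl
        · exact hcl (Finset.mem_coe.mpr hu) (Finset.mem_coe.mpr hwT.1) (Ne.symm hwu)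
        · exact hcl (Finset.mem_coe.mpr hv) (Finset.mem_coe.mpr hwT.1) (Ne.symm hwv)
      exact (Finset.card_le_card hsub).trans Finset.card_image_le
  calc 2 * (G.cliqueFinset 3).card
      = ∑ _T ∈ G.cliqueFinset 3, 2 := by rw [Finset.sum_const, smul_eq_mul, mul_comm]
    _ ≤ ∑ T ∈ G.cliqueFinset 3,
          ((G.edgeFinset \ A).filter fun e => ∀ x ∈ e, x ∈ T).card :=
        Finset.sum_le_sum aux2
    _ = ∑ e ∈ G.edgeFinset \ A,
          ((G.cliqueFinset 3).filter fun T => ∀ x ∈ e, x ∈ T).card := by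
        simp only [Finset.card_filter]
        rw [Finset.sum_comm]
    _ ≤ ∑ e ∈ G.edgeFinset \ A,
          (Finset.univ.filter fun w => ∀ x ∈ e, G.Adj x w).card :=
        Finset.sum_le_sum aux1
end
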